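/- Let m ≥ 1 and let X_1,…,X_n be i.i.d. random variables on a probability space, each uniformly distributed over the 2^m vectors in Fin m → Bool. Then for any two distinct nonzero vectors c, c' : Fin m → Bool, the symmetry statistics S_c = Σ_{i=1}^n χ_c(X_i) and S_{c'} = Σ_{i=1}^n χ_{c'}(X_i) are independent random variables. -/

import Mathlib

open MeasureTheory
open scoped ENNReal

/-- `⟨a,x⟩`: the number of coordinates where both `a` and `x` are `true`. -/
def binInner {m : ℕ} (a x : Fin m → Bool) : ℕ :=
  (Finset.univ.filter (fun k => a k = true ∧ x k = true)).card

/-- The Walsh character `χ_a(x) = (-1)^⟨a,x⟩` as a real number. -/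
noncomputable def walsh {m : ℕ} (a x : Fin m → Bool) : ℝ :=
  (-1 : ℝ) ^ binInner a x

/-!
Identify `Bool` with `ZMod 2`: then `⟨a, x⟩ mod 2` is the dot product `a ⬝ᵥ x` and
`χ_a(x) = (-1) ^ (a ⬝ᵥ x)`. The vector `Z = (X_1, …, X_n)` is uniform on `(𝔽₂^m)^n`, and `S_c`,
`S_{c'}` are functions of the two components of the additive map
`z ↦ ((c ⬝ᵥ z_i)_i, (c' ⬝ᵥ z_i)_i)`. Distinct nonzero vectors over `𝔽₂` are linearly independent,
so this map is surjective and all its fibres have the same size. Hence it pushes the uniform law of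
`Z` to the uniform law on the product, whose two components are independent.
-/

open Finset ProbabilityTheory

def boolEquivZModTwo : Bool ≃ ZMod 2 where
  toFun b := b.toNat
  invFun z := z = 1
  left_inv := by decide
  right_inv := by decide

lemma binInner_cast_eq_dotProduct {m : ℕ} (a x : Fin m → Bool) :
    (binInner a x : ZMod 2) = (boolEquivZModTwo ∘ a) ⬝ᵥ (boolEquivZModTwo ∘ x) := by
  rw [binInner, card_filter, Nat.cast_sum, dotProduct]
  refine sum_congr rfl fun k _ => ?_
  simp only [Function.comp_apply]
  cases a k <;> cases x k <;> rfl

lemma walsh_eq_neg_one_pow_dotProduct {m : ℕ} (a x : Fin m → Bool) :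
    walsh a x = (-1) ^ ((boolEquivZModTwo ∘ a) ⬝ᵥ (boolEquivZModTwo ∘ x)).val := by
  rw [walsh, ← binInner_cast_eq_dotProduct, ZMod.val_natCast, ← neg_one_pow_eq_pow_mod_two]

lemma ZModModule.linearIndependent_pair {V : Type*} [AddCommGroup V] [Module (ZMod 2) V]
    {x y : V} (hx : x ≠ 0) (hy : y ≠ 0) (hxy : x ≠ y) : LinearIndependent (ZMod 2) ![x, y] := by
  rw [LinearIndependent.pair_iff]
  have h01 : ∀ s : ZMod 2, s = 0 ∨ s = 1 := by decide
  intro s t hst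
  rcases h01 s with rfl | rfl <;> rcases h01 t with rfl | rfl <;>
    simp_all [add_eq_zero_iff_eq_neg, ZModModule.neg_eq_self]

lemma linearIndependent_boolEquivZModTwo_comp_pair {m : ℕ} {c c' : Fin m → Bool}
    (hc : ∃ k, c k = true) (hc' : ∃ k, c' k = true) (hne : c ≠ c') :
    LinearIndependent (ZMod 2) ![boolEquivZModTwo ∘ c, boolEquivZModTwo ∘ c'] := by
  have hne_zero : ∀ a : Fin m → Bool, (∃ k, a k = true) → boolEquivZModTwo ∘ a ≠ 0 := by
    rintro a ⟨k, hk⟩ h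
    simpa [hk, boolEquivZModTwo] using congrFun h k
  exact ZModModule.linearIndependent_pair (hne_zero c hc) (hne_zero c' hc')
    fun h => hne (boolEquivZModTwo.injective.comp_left h)

theorem Matrix.mulVec_surjective_of_linearIndependent_row {K m n : Type*} [Field K]
    [Fintype m] [Fintype n] {M : Matrix m n K} (h : LinearIndependent K M.row) :
    Function.Surjective M.mulVec := by
  have hrange : LinearMap.range M.mulVecLin = ⊤ := Submodule.eq_top_of_finrank_eq <| by
    rw [← Matrix.rank, h.rank_matrix, Module.finrank_fintype_fun_eq_card]
  rw [← Matrix.coe_mulVecLin]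
  exact LinearMap.range_eq_top.mp hrange

lemma surjective_dotProduct_pair {K n : Type*} [Field K] [Fintype n] {x y : n → K}
    (h : LinearIndependent K ![x, y]) : Function.Surjective fun v => (x ⬝ᵥ v, y ⬝ᵥ v) := by
  intro p
  obtain ⟨v, hv⟩ :=
    Matrix.mulVec_surjective_of_linearIndependent_row (M := Matrix.of ![x, y]) h ![p.1, p.2]
  exact ⟨v, Prod.ext (congrFun hv 0) (congrFun hv 1)⟩

section Counting

variable {G : Type*} [AddGroup G] [Fintype G]

lemma AddMonoidHom.card_fiber_mul_card_of_surjective {M : Type*} [AddMonoid M] [Fintype M]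
    [DecidableEq M] (φ : G →+ M) (hφ : Function.Surjective φ) (y : M) :
    #{v | φ v = y} * Fintype.card M = Fintype.card G := by
  have hfib : ∀ y', #{v | φ v = y'} = #{v | φ v = y} := fun y' =>
    AddMonoidHom.card_fiber_eq_of_mem_range φ (hφ y') (hφ y)
  calc #{v | φ v = y} * Fintype.card M = ∑ y' : M, #{v | φ v = y'} := by simp [hfib, mul_comm]
    _ = Fintype.card G := (card_eq_sum_card_fiberwise fun v _ => mem_univ (φ v)).symm

lemma AddMonoidHom.card_filter_fst_snd_mul_card {H K : Type*} [AddGroup H] [Fintype H]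
    [DecidableEq H] [AddGroup K] [Fintype K] [DecidableEq K] (φ : G →+ H × K)
    (hφ : Function.Surjective φ) (b : H) (c : K) :
    #{v | (φ v).1 = b ∧ (φ v).2 = c} * Fintype.card G
      = #{v | (φ v).1 = b} * #{v | (φ v).2 = c} := by
  have hbc : #{v | (φ v).1 = b ∧ (φ v).2 = c} * (Fintype.card H * Fintype.card K)
      = Fintype.card G := by
    simpa [Prod.ext_iff] using φ.card_fiber_mul_card_of_surjective hφ (b, c)
  have hb : #{v | (φ v).1 = b} * Fintype.card H = Fintype.card G :=
    ((AddMonoidHom.fst H K).comp φ).card_fiber_mul_card_of_surjective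
      (Prod.fst_surjective.comp hφ) b
  have hc : #{v | (φ v).2 = c} * Fintype.card K = Fintype.card G :=
    ((AddMonoidHom.snd H K).comp φ).card_fiber_mul_card_of_surjective
      (Prod.snd_surjective.comp hφ) c
  refine Nat.eq_of_mul_eq_mul_right (by positivity : 0 < Fintype.card H * Fintype.card K) ?_
  calc _ = (#{v | (φ v).1 = b ∧ (φ v).2 = c} * (Fintype.card H * Fintype.card K))
          * Fintype.card G := by ring
    _ = (#{v | (φ v).1 = b} * Fintype.card H) * (#{v | (φ v).2 = c} * Fintype.card K) := by
          rw [hbc, hb, hc]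
    _ = _ := by ring

end Counting

def IsUniform {Ω α : Type*} [MeasurableSpace Ω] [Fintype α] (P : Measure Ω) (Y : Ω → α) : Prop :=
  ∀ v, P {ω | Y ω = v} = (Fintype.card α : ℝ≥0∞)⁻¹

section Uniform

variable {Ω α : Type*} [MeasurableSpace Ω] {P : Measure Ω} [Fintype α]

lemma IsUniform.comp_equiv {β : Type*} [Fintype β] {Y : Ω → α} (hY : IsUniform P Y)
    (e : α ≃ β) : IsUniform P (fun ω => e (Y ω)) := by
  intro v
  simp only [← e.eq_symm_apply, hY (e.symm v), Fintype.card_congr e]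

lemma IsUniform.pi [MeasurableSpace α] [MeasurableSingletonClass α] {ι : Type*} [Fintype ι]
    [DecidableEq ι] {X : ι → Ω → α} (hX : iIndepFun X P) (hunif : ∀ i, IsUniform P (X i)) :
    IsUniform P (fun ω i => X i ω) := by
  intro x
  have hset : {ω | (fun i => X i ω) = x} = ⋂ i ∈ (univ : Finset ι), X i ⁻¹' {x i} := by
    ext ω; simp [funext_iff]
  rw [hset, hX.measure_inter_preimage_eq_mul _ fun i _ => measurableSet_singleton (x i)]
  simp only [Set.preimage, Set.mem_singleton_iff, hunif _ _, prod_const, card_univ,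
    Fintype.card_fun, Nat.cast_pow, ENNReal.inv_pow]

variable [MeasurableSpace α] [MeasurableSingletonClass α] {Y : Ω → α}

lemma IsUniform.measure_setOf (hY : Measurable Y) (hunif : IsUniform P Y) (p : α → Prop)
    [DecidablePred p] : P {ω | p (Y ω)} = #{v | p v} / Fintype.card α := by
  have hset : {ω | p (Y ω)} = Y ⁻¹' ↑(univ.filter p) := by ext; simp
  rw [hset, ← sum_measure_preimage_singleton _ fun v _ => hY (measurableSet_singleton v)]
  simp only [Set.preimage, Set.mem_singleton_iff, hunif _, sum_const, nsmul_eq_mul,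
    div_eq_mul_inv]

lemma IsUniform.indepFun_of_card_filter [IsFiniteMeasure P] [Nonempty α] {β γ : Type*}
    [MeasurableSpace β] [MeasurableSingletonClass β] [Countable β] [DecidableEq β]
    [MeasurableSpace γ] [MeasurableSingletonClass γ] [Countable γ] [DecidableEq γ]
    (hY : Measurable Y) (hunif : IsUniform P Y) {f : α → β} {g : α → γ}
    (hfg : ∀ b c, #{v | f v = b ∧ g v = c} * Fintype.card α = #{v | f v = b} * #{v | g v = c}) :
    IndepFun (fun ω => f (Y ω)) (fun ω => g (Y ω)) P := by
  have hf : Measurable fun ω => f (Y ω) := (measurable_of_countable f).comp hY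
  have hg : Measurable fun ω => g (Y ω) := (measurable_of_countable g).comp hY
  rw [indepFun_iff_map_prod_eq_prod_map_map hf.aemeasurable hg.aemeasurable]
  refine Measure.ext_of_singleton fun ⟨b, c⟩ => ?_
  rw [← Set.singleton_prod_singleton, Measure.prod_prod,
    Measure.map_apply (hf.prodMk hg) ((measurableSet_singleton b).prod (measurableSet_singleton c)),
    Measure.map_apply hf (measurableSet_singleton b),
    Measure.map_apply hg (measurableSet_singleton c)]
  change P {ω | f (Y ω) = b ∧ g (Y ω) = c} = P {ω | f (Y ω) = b} * P {ω | g (Y ω) = c}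
  have hN0 : (Fintype.card α : ℝ≥0∞) ≠ 0 := by simp
  have hNtop : (Fintype.card α : ℝ≥0∞) ≠ ⊤ := ENNReal.natCast_ne_top _
  rw [hunif.measure_setOf hY (fun v => f v = b ∧ g v = c), hunif.measure_setOf hY (f · = b),
    hunif.measure_setOf hY (g · = c),
    ← ENNReal.mul_div_mul_comm (Or.inl hN0) (Or.inl hNtop),
    ← ENNReal.mul_div_mul_right _ _ hN0 hNtop]
  congr 1
  exact_mod_cast hfg b c

end Uniform

section DotProduct

variable {R n : Type*} [NonUnitalNonAssocRing R] [Fintype n]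

def dotProductPairHom (ι : Type*) (x y : n → R) : (ι → n → R) →+ (ι → R) × (ι → R) :=
  AddMonoidHom.mk' (fun z => (fun i => x ⬝ᵥ z i, fun i => y ⬝ᵥ z i)) fun z w => by
    ext i <;> simp [dotProduct_add]

lemma dotProductPairHom_surjective (ι : Type*) {x y : n → R}
    (hxy : Function.Surjective fun v => (x ⬝ᵥ v, y ⬝ᵥ v)) :
    Function.Surjective (dotProductPairHom ι x y) := by
  intro p
  choose z hz using fun i => hxy (p.1 i, p.2 i)
  exact ⟨z, Prod.ext (funext fun i => congrArg Prod.fst (hz i))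
    (funext fun i => congrArg Prod.snd (hz i))⟩

end DotProduct

theorem symmetry_statistics_pairwise_independent_general {Ω : Type*} [MeasurableSpace Ω]
    (P : Measure Ω) [IsProbabilityMeasure P]
    {m n : ℕ}
    (X : Fin n → Ω → Fin m → Bool)
    (hmeas : ∀ i, Measurable (X i))
    (hindep : ProbabilityTheory.iIndepFun X P)
    (hunif : ∀ i, ∀ v : Fin m → Bool, P {ω | X i ω = v} = ((2 : ℝ≥0∞) ^ m)⁻¹)
    (c c' : Fin m → Bool) (hc : ∃ k, c k = true) (hc' : ∃ k, c' k = true)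
    (hne : c ≠ c') :
    ProbabilityTheory.IndepFun (fun ω => ∑ i : Fin n, walsh c (X i ω))
      (fun ω => ∑ i : Fin n, walsh c' (X i ω)) P := by
  let e : (Fin n → Fin m → Bool) ≃ (Fin n → Fin m → ZMod 2) :=
    Equiv.piCongrRight fun _ => Equiv.piCongrRight fun _ => boolEquivZModTwo
  let Z : Ω → Fin n → Fin m → ZMod 2 := fun ω => e fun i => X i ω
  have hZ : IsUniform P Z := by
    refine (IsUniform.pi hindep fun i v => ?_).comp_equiv e
    simp [hunif i v]
  have hZmeas : Measurable Z := (measurable_of_countable e).comp (measurable_pi_lambda _ hmeas)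
  let φ := dotProductPairHom (Fin n) (boolEquivZModTwo ∘ c) (boolEquivZModTwo ∘ c')
  have hφ : Function.Surjective φ := dotProductPairHom_surjective _ <|
    surjective_dotProduct_pair <| linearIndependent_boolEquivZModTwo_comp_pair hc hc' hne
  have hind := hZ.indepFun_of_card_filter hZmeas (φ.card_filter_fst_snd_mul_card hφ)
  have hsum : Measurable fun u : Fin n → ZMod 2 => ∑ i, (-1 : ℝ) ^ (u i).val :=
    measurable_of_countable _
  have hS : ∀ a, (fun ω => ∑ i, walsh a (X i ω))
      = fun ω => ∑ i, (-1 : ℝ) ^ ((boolEquivZModTwo ∘ a) ⬝ᵥ Z ω i).val :=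
    fun a => funext fun ω => by simp only [walsh_eq_neg_one_pow_dotProduct]; rfl
  rw [hS c, hS c']
  exact hind.comp hsum hsum

/-- For i.i.d. uniform binary random vectors `X_1, …, X_n` and distinct nonzero indices
`c ≠ c'`, the symmetry statistics `S_c = Σ_i χ_c(X_i)` and `S_{c'} = Σ_i χ_{c'}(X_i)`
are independent random variables. -/
theorem symmetry_statistics_pairwise_independent {Ω : Type*} [MeasurableSpace Ω]
    (P : Measure Ω) [IsProbabilityMeasure P]
    {m n : ℕ} (hm : 1 ≤ m)
    (X : Fin n → Ω → Fin m → Bool)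
    (hmeas : ∀ i, Measurable (X i))
    (hindep : ProbabilityTheory.iIndepFun X P)
    (hunif : ∀ i, ∀ v : Fin m → Bool, P {ω | X i ω = v} = ((2 : ℝ≥0∞) ^ m)⁻¹)
    (c c' : Fin m → Bool) (hc : ∃ k, c k = true) (hc' : ∃ k, c' k = true)
    (hne : c ≠ c') :
    ProbabilityTheory.IndepFun (fun ω => ∑ i : Fin n, walsh c (X i ω))
      (fun ω => ∑ i : Fin n, walsh c' (X i ω)) P :=
  symmetry_statistics_pairwise_independent_general P X hmeas hindep hunif c c' hc hc' hne
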